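/- Let X be a set, μ : (X → {0,1}) → [0,∞) modular and monotone with μ(0) = 0, and define the integral of a simple function by ∫(∑_{k=1}^{n} a_k f_k) dμ := ∑_{k=1}^{n} a_k μ(f_k). Then this is well-defined: if ∑_{k=1}^{n} a_k f_k(x) = ∑_{ℓ=1}^{m} b_ℓ g_ℓ(x) for all x ∈ X, where each f_k, g_ℓ : X → {0,1}, a_k, b_ℓ ∈ ℝ, and μ additionally satisfies μ(f) = μ(f∧g) + μ(f∧(1−g)), then ∑_{k=1}^{n} a_k μ(f_k) = ∑_{ℓ=1}^{m} b_ℓ μ(g_ℓ). -/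

import Mathlib

/-!
Refine all the `f k` and `g l` to the atoms of the Boolean algebra they generate, i.e. the
cells of `X` on which each of them is constant. The splitting rule makes `μ` finitely
additive over this partition, so `∑ a k μ(f k) - ∑ b l μ(g l)` becomes the sum over the
cells of `μ(cell)` times the value of `∑ a k f k - ∑ b l g l` on that cell. That value is
`0` on nonempty cells, and empty cells have measure `μ ⊥ = 0`.
-/

open Finset Function

section BooleanAlgebra

variable {α M : Type*} [BooleanAlgebra α] [AddCommGroup M] {μ : α → M}

theorem map_bot_eq_zero_of_split (hsub : ∀ a b, μ a = μ (a ⊓ b) + μ (a ⊓ bᶜ)) :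
    μ ⊥ = 0 := by
  simpa using hsub ⊥ ⊥

theorem map_inf_finset_sup_of_split (hsub : ∀ a b, μ a = μ (a ⊓ b) + μ (a ⊓ bᶜ))
    {ι : Type*} (A : ι → α) (a : α) (s : Finset ι) (hA : (s : Set ι).PairwiseDisjoint A) :
    μ (a ⊓ s.sup A) = ∑ i ∈ s, μ (a ⊓ A i) := by
  classical
  induction s using Finset.induction_on with
  | empty => simpa using map_bot_eq_zero_of_split hsub
  | insert j s hj ih =>
    rw [coe_insert, Set.pairwiseDisjoint_insert_of_notMem hj] at hA
    have hdisj : Disjoint (s.sup A) (A j) :=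
      Finset.disjoint_sup_left.2 fun i hi => (hA.2 i hi).symm
    have hin : (A j ⊔ s.sup A) ⊓ A j = A j := inf_of_le_right le_sup_left
    have hout : (A j ⊔ s.sup A) ⊓ (A j)ᶜ = s.sup A := by
      rw [inf_sup_right, inf_compl_self, bot_sup_eq, inf_of_le_left hdisj.le_compl_right]
    rw [sum_insert hj, sup_insert, hsub _ (A j), inf_assoc, inf_assoc, hin, hout, ih hA.1]

theorem map_eq_sum_map_inf_of_split (hsub : ∀ a b, μ a = μ (a ⊓ b) + μ (a ⊓ bᶜ))
    {ι : Type*} [Fintype ι] (A : ι → α) (hA : Pairwise (Disjoint on A))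
    (hcover : univ.sup A = ⊤) (a : α) :
    μ a = ∑ i, μ (a ⊓ A i) := by
  simpa [hcover] using map_inf_finset_sup_of_split hsub A a univ (hA.set_pairwise _)

end BooleanAlgebra

section Atoms

variable {X ι : Type*} [Fintype ι]

def atom (h : ι → X → Bool) (s : ι → Bool) : X → Bool :=
  fun x => decide ((fun i => h i x) = s)

theorem pairwise_disjoint_atom (h : ι → X → Bool) : Pairwise (Disjoint on atom h) := by
  intro s t hst
  refine disjoint_iff.2 <| funext fun x => ?_
  simp only [Pi.inf_apply, atom, Bool.min_eq_and, Pi.bot_apply, bot_eq_false,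
    Bool.and_eq_false_imp, decide_eq_true_eq, decide_eq_false_iff_not]
  rintro rfl
  exact hst

theorem sup_atom [DecidableEq ι] (h : ι → X → Bool) : univ.sup (atom h) = ⊤ :=
  eq_top_iff.2 fun x =>
    le_trans (by simp [atom]) (le_sup (f := atom h) (mem_univ fun i => h i x) x)

theorem inf_atom (h : ι → X → Bool) (i : ι) (s : ι → Bool) :
    h i ⊓ atom h s = if s i then atom h s else ⊥ := by
  funext x
  by_cases hx : (fun i => h i x) = s
  · subst hx; cases hi : h i x <;> simp [atom, hi]
  · by_cases hs : s i <;> simp [atom, hx, hs]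

theorem atom_eq_bot (h : ι → X → Bool) (s : ι → Bool) (hs : ∀ x, (fun i => h i x) ≠ s) :
    atom h s = ⊥ := by
  funext x; simpa [atom] using hs x

end Atoms

section Integral

variable {X ι R : Type*} [Fintype ι] [DecidableEq ι] [CommRing R] {μ : (X → Bool) → R}

theorem sum_mul_map_eq_sum_atom (hsub : ∀ f g, μ f = μ (f ⊓ g) + μ (f ⊓ gᶜ))
    (h : ι → X → Bool) (c : ι → R) :
    ∑ i, c i * μ (h i) =
      ∑ s : ι → Bool, (∑ i, c i * if s i then 1 else 0) * μ (atom h s) := by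
  have hsplit : ∀ i, μ (h i) = ∑ s, (if s i then 1 else 0) * μ (atom h s) := fun i => by
    rw [map_eq_sum_map_inf_of_split hsub (atom h) (pairwise_disjoint_atom h) (sup_atom h)]
    refine sum_congr rfl fun s _ => ?_
    rw [inf_atom]
    split_ifs
    · rw [one_mul]
    · rw [zero_mul, map_bot_eq_zero_of_split hsub]
  simp only [hsplit, mul_sum, sum_mul, mul_assoc]
  exact sum_comm

theorem sum_mul_map_eq_zero (hsub : ∀ f g, μ f = μ (f ⊓ g) + μ (f ⊓ gᶜ))
    (h : ι → X → Bool) (c : ι → R) (hc : ∀ x, ∑ i, c i * (if h i x then 1 else 0) = 0) :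
    ∑ i, c i * μ (h i) = 0 := by
  rw [sum_mul_map_eq_sum_atom hsub]
  refine sum_eq_zero fun s _ => ?_
  by_cases hs : ∃ x, (fun i => h i x) = s
  · obtain ⟨x, rfl⟩ := hs
    rw [hc x, zero_mul]
  · push Not at hs
    rw [atom_eq_bot h s hs, map_bot_eq_zero_of_split hsub, mul_zero]

end Integral

theorem stmt_18_general {X : Type*} (μ : (X → Bool) → ℝ)
    (hsub : ∀ f g : X → Bool,
      μ f = μ (fun x => f x && g x) + μ (fun x => f x && ! g x))
    (n m : ℕ) (f : Fin n → X → Bool) (a : Fin n → ℝ)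
    (g : Fin m → X → Bool) (b : Fin m → ℝ)
    (heq : ∀ x : X,
      (∑ k, a k * (if f k x then (1 : ℝ) else 0)) =
        ∑ l, b l * (if g l x then (1 : ℝ) else 0)) :
    ∑ k, a k * μ (f k) = ∑ l, b l * μ (g l) := by
  -- `hsub` applies as is: `⊓` and `ᶜ` on `X → Bool` unfold to the pointwise `&&` and `!`.
  have hdiff := sum_mul_map_eq_zero hsub (Sum.elim f g) (Sum.elim a (-b)) fun x => by
    simp only [Fintype.sum_sum_type, Sum.elim_inl, Sum.elim_inr, Pi.neg_apply, neg_mul,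
      sum_neg_distrib, ← sub_eq_add_neg]
    exact sub_eq_zero.2 (heq x)
  simp only [Fintype.sum_sum_type, Sum.elim_inl, Sum.elim_inr, Pi.neg_apply, neg_mul,
    sum_neg_distrib, ← sub_eq_add_neg] at hdiff
  exact sub_eq_zero.1 hdiff

/-- the integral of a simple function is well defined
(Lemma pre-10.6(ii)). -/
theorem stmt_18 {X : Type*} (μ : (X → Bool) → ℝ)
    (hnn : ∀ f, 0 ≤ μ f)
    (hmod : ∀ f g : X → Bool,
      μ f + μ g = μ (fun x => f x || g x) + μ (fun x => f x && g x))
    (hsub : ∀ f g : X → Bool,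
      μ f = μ (fun x => f x && g x) + μ (fun x => f x && ! g x))
    (hmono : ∀ f g : X → Bool, (∀ x, f x ≤ g x) → μ f ≤ μ g)
    (hzero : μ (fun _ => false) = 0)
    (n m : ℕ) (f : Fin n → X → Bool) (a : Fin n → ℝ)
    (g : Fin m → X → Bool) (b : Fin m → ℝ)
    (heq : ∀ x : X,
      (∑ k, a k * (if f k x then (1 : ℝ) else 0)) =
        ∑ l, b l * (if g l x then (1 : ℝ) else 0)) :
    ∑ k, a k * μ (f k) = ∑ l, b l * μ (g l) :=
  stmt_18_general μ hsub n m f a g b heq
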